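/- arXiv:2010.08936 — 3 statements merged into one kernel-verified Lean document; each statement's English description precedes it below -/
import Mathlib

section
/- Cycle-free property: if H1,...,Hr are pairwise edge-disjoint minimal densest subgraphs of G, then the number of vertices lying in at least two of the subgraphs H1,...,Hr is strictly less than r. -/
open scoped BigOperators

variable {V : Type*}

/-- Density of a subgraph: m(H)/(n(H)-1). -/
noncomputable def density (G : SimpleGraph V) (H : G.Subgraph) : ℝ :=
  (H.edgeSet.ncard : ℝ) / ((H.verts.ncard : ℝ) - 1)

/-- Fractional arboricity: maximum density over connected subgraphs. -/
noncomputable def fracArboricity (G : SimpleGraph V) : ℝ :=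
  sSup {d : ℝ | ∃ H : G.Subgraph, H.Connected ∧ d = density G H}

/-- A densest subgraph: connected, attaining the maximum density. -/
def IsDensest (G : SimpleGraph V) (H : G.Subgraph) : Prop :=
  H.Connected ∧ density G H = fracArboricity G

/-- A minimal densest subgraph: no proper subgraph is densest. -/
def IsMinimalDensest (G : SimpleGraph V) (H : G.Subgraph) : Prop :=
  IsDensest G H ∧ ∀ K : G.Subgraph, K < H → ¬ IsDensest G K

/-!
A densest subgraph `H` has exactly `g (n(H) - 1)` edges, where `g` is the fractional
arboricity, and every connected subgraph has at most that many. If two edge-disjoint densest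
subgraphs share `t ≥ 1` vertices, their union is connected with `g (n_A + n_B - 2)` edges on
`n_A + n_B - t` vertices, so `g (t - 1) ≤ 0`: hence `t = 1` (when `g ≤ 0` a densest subgraph
is a single vertex), and then the union is densest again. Merging such a pair into one subgraph
lowers the number of subgraphs by one and the number of shared vertices by at most one, so
induction on `r` gives the bound.
-/

open Set Function

namespace SimpleGraph.Subgraph

variable {G : SimpleGraph V}

theorem Connected.one_le_ncard_verts [Finite V] {H : G.Subgraph} (hH : H.Connected) :
    1 ≤ H.verts.ncard :=
  (ncard_pos (toFinite _)).2 hH.nonempty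

theorem Connected.verts_subsingleton_of_edgeSet_eq_empty {H : G.Subgraph} (hH : H.Connected)
    (he : H.edgeSet = ∅) : H.verts.Subsingleton := by
  have hbot : H.coe = ⊥ := by
    ext a b
    simp only [coe_adj, bot_adj, iff_false]
    exact fun hab => he.subset (H.mem_edgeSet.2 hab)
  intro a ha b hb
  have := hH.preconnected ⟨a, ha⟩ ⟨b, hb⟩
  rw [hbot, reachable_bot] at this
  exact congrArg Subtype.val this

theorem edgeSet_eq_empty_of_ncard_verts_eq_one {H : G.Subgraph} (h : H.verts.ncard = 1) :
    H.edgeSet = ∅ := by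
  obtain ⟨a, ha⟩ := ncard_eq_one.1 h
  refine eq_empty_of_forall_notMem fun e he => ?_
  induction e using Sym2.ind with
  | _ x y =>
    have hxy := H.mem_edgeSet.1 he
    have hx := H.edge_vert hxy
    have hy := H.edge_vert hxy.symm
    rw [ha, mem_singleton_iff] at hx hy
    exact hxy.ne (hx.trans hy.symm)

theorem ncard_edgeSet_sup [Finite V] {A B : G.Subgraph} (h : Disjoint A.edgeSet B.edgeSet) :
    (A ⊔ B).edgeSet.ncard = A.edgeSet.ncard + B.edgeSet.ncard := by
  rw [edgeSet_sup, ncard_union_eq h]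

theorem ncard_verts_sup_add_ncard_inter [Finite V] (A B : G.Subgraph) :
    (A ⊔ B).verts.ncard + (A.verts ∩ B.verts).ncard = A.verts.ncard + B.verts.ncard := by
  rw [verts_sup, add_comm, ncard_inter_add_ncard_union]

end SimpleGraph.Subgraph

open SimpleGraph Subgraph

section Density

variable {G : SimpleGraph V} {H : G.Subgraph}

theorem ncard_edgeSet_eq_density_mul :
    (H.edgeSet.ncard : ℝ) = density G H * (H.verts.ncard - 1) := by
  by_cases h : H.verts.ncard = 1
  · simp [edgeSet_eq_empty_of_ncard_verts_eq_one h, h]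
  · rw [density, div_mul_cancel₀]
    exact sub_ne_zero.2 (by exact_mod_cast h)

theorem density_le_fracArboricity [Finite V] (hH : H.Connected) :
    density G H ≤ fracArboricity G := by
  refine le_csSup ?_ ⟨H, hH, rfl⟩
  refine ((finite_range (density G)).subset ?_).bddAbove
  rintro _ ⟨K, -, rfl⟩
  exact mem_range_self K

theorem SimpleGraph.Subgraph.Connected.ncard_edgeSet_le [Finite V] (hH : H.Connected) :
    (H.edgeSet.ncard : ℝ) ≤ fracArboricity G * (H.verts.ncard - 1) := by
  have hn : (1 : ℝ) ≤ H.verts.ncard := by exact_mod_cast hH.one_le_ncard_verts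
  rw [ncard_edgeSet_eq_density_mul]
  exact mul_le_mul_of_nonneg_right (density_le_fracArboricity hH) (by linarith)

theorem IsDensest.ncard_edgeSet_eq (hH : IsDensest G H) :
    (H.edgeSet.ncard : ℝ) = fracArboricity G * (H.verts.ncard - 1) := by
  rw [ncard_edgeSet_eq_density_mul, hH.2]

theorem IsDensest.ncard_verts_le_one_of_fracArboricity_nonpos [Finite V] (hH : IsDensest G H)
    (hg : fracArboricity G ≤ 0) : H.verts.ncard ≤ 1 := by
  have hn : (1 : ℝ) ≤ H.verts.ncard := by exact_mod_cast hH.1.one_le_ncard_verts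
  have hm : (H.edgeSet.ncard : ℝ) ≤ 0 := by
    rw [hH.ncard_edgeSet_eq]
    exact mul_nonpos_of_nonpos_of_nonneg hg (by linarith)
  have he : H.edgeSet = ∅ :=
    (ncard_eq_zero (toFinite _)).1 (by exact_mod_cast hm.antisymm (Nat.cast_nonneg _))
  exact ncard_le_one_iff_subsingleton.2 (hH.1.verts_subsingleton_of_edgeSet_eq_empty he)

end Density

section Overlap

variable {G : SimpleGraph V} [Finite V] {A B : G.Subgraph}

theorem IsDensest.ncard_edgeSet_sup (hA : IsDensest G A) (hB : IsDensest G B)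
    (hAB : Disjoint A.edgeSet B.edgeSet) :
    ((A ⊔ B).edgeSet.ncard : ℝ) = fracArboricity G * (A.verts.ncard + B.verts.ncard - 2) := by
  rw [Subgraph.ncard_edgeSet_sup hAB, Nat.cast_add, hA.ncard_edgeSet_eq, hB.ncard_edgeSet_eq]
  ring

theorem IsDensest.ncard_inter_verts_le_one (hA : IsDensest G A) (hB : IsDensest G B)
    (hAB : Disjoint A.edgeSet B.edgeSet) (hne : (A.verts ∩ B.verts).Nonempty) :
    (A.verts ∩ B.verts).ncard ≤ 1 := by
  rcases le_or_gt (fracArboricity G) 0 with hg | hg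
  · exact (ncard_le_ncard inter_subset_left).trans
      (hA.ncard_verts_le_one_of_fracArboricity_nonpos hg)
  have hU := (connected_sup hA.1.preconnected hB.1.preconnected hne).ncard_edgeSet_le
  have hn : ((A ⊔ B).verts.ncard : ℝ) + (A.verts ∩ B.verts).ncard =
      A.verts.ncard + B.verts.ncard := by exact_mod_cast ncard_verts_sup_add_ncard_inter A B
  rw [hA.ncard_edgeSet_sup hB hAB] at hU
  have key : fracArboricity G * ((A.verts ∩ B.verts).ncard - 1) ≤ 0 := by nlinarith
  have : ((A.verts ∩ B.verts).ncard : ℝ) ≤ 1 := by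
    linarith [(mul_nonpos_iff_pos_imp_nonpos.1 key).1 hg]
  exact_mod_cast this

theorem IsDensest.sup (hA : IsDensest G A) (hB : IsDensest G B)
    (hAB : Disjoint A.edgeSet B.edgeSet) (hne : (A.verts ∩ B.verts).Nonempty) :
    IsDensest G (A ⊔ B) := by
  refine ⟨connected_sup hA.1.preconnected hB.1.preconnected hne, ?_⟩
  have h1 : (A.verts ∩ B.verts).ncard = 1 :=
    (hA.ncard_inter_verts_le_one hB hAB hne).antisymm ((ncard_pos (toFinite _)).2 hne)
  have hn : ((A ⊔ B).verts.ncard : ℝ) + 1 = A.verts.ncard + B.verts.ncard := by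
    exact_mod_cast h1 ▸ ncard_verts_sup_add_ncard_inter A B
  by_cases hu : (A ⊔ B).verts.ncard = 1
  · -- then `A` has a single vertex as well, and both densities are `0 / 0`
    have ha : A.verts.ncard = 1 := le_antisymm
      (hu ▸ ncard_le_ncard (verts_mono le_sup_left)) hA.1.one_le_ncard_verts
    rw [← hA.2, density, density, hu, ha]
    simp
  · have hu' : ((A ⊔ B).verts.ncard : ℝ) - 1 ≠ 0 := sub_ne_zero.2 (by exact_mod_cast hu)
    rw [density, div_eq_iff hu', hA.ncard_edgeSet_sup hB hAB]
    linear_combination (fracArboricity G) * hn.symm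

end Overlap

namespace SimpleGraph.Subgraph

variable {G : SimpleGraph V} {ι : Type*}

def sharedVerts (H : ι → G.Subgraph) : Set V :=
  {v | ∃ i j, i ≠ j ∧ v ∈ (H i).verts ∧ v ∈ (H j).verts}

def mergePair [DecidableEq ι] (H : ι → G.Subgraph) (i j : ι) (k : {k // k ≠ j}) :
    G.Subgraph :=
  if k.1 = i then H i ⊔ H j else H k

section Merge

variable [DecidableEq ι] {H : ι → G.Subgraph} {i j : ι}

theorem sharedVerts_subset_mergePair (hij : i ≠ j) :
    sharedVerts H ⊆ sharedVerts (mergePair H i j) ∪ ((H i).verts ∩ (H j).verts) := by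
  let lift : ι → {k // k ≠ j} := fun k => if h : k = j then ⟨i, hij⟩ else ⟨k, h⟩
  have hlift : ∀ k, (H k).verts ⊆ (mergePair H i j (lift k)).verts := by
    intro k
    by_cases hkj : k = j
    · subst hkj
      simp [lift, mergePair]
    · by_cases hki : k = i
      · subst hki
        simp [lift, mergePair, hkj]
      · simp [lift, mergePair, hkj, hki]
  rintro v ⟨a, b, hab, ha, hb⟩
  by_cases hl : lift a = lift b
  · right
    simp only [lift, Subtype.ext_iff] at hl
    split_ifs at hl <;> grind
  · exact Or.inl ⟨lift a, lift b, hl, hlift a ha, hlift b hb⟩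

theorem pairwise_disjoint_edgeSet_mergePair
    (hdisj : Pairwise (Disjoint on fun k => (H k).edgeSet)) :
    Pairwise (Disjoint on fun k => (mergePair H i j k).edgeSet) := by
  rintro ⟨k, hkj⟩ ⟨l, hlj⟩ hkl
  have hkl' : k ≠ l := fun h => hkl (Subtype.ext h)
  simp only [onFun, mergePair]
  split_ifs with hki hli hli
  · exact absurd (hki.trans hli.symm) hkl'
  · subst hki
    rw [edgeSet_sup]
    exact disjoint_union_left.2 ⟨hdisj hkl', hdisj (Ne.symm hlj)⟩
  · subst hli
    rw [edgeSet_sup]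
    exact disjoint_union_right.2 ⟨hdisj hkl', hdisj hkj⟩
  · exact hdisj hkl'

end Merge

theorem ncard_sharedVerts_lt_card [Finite V] {P : G.Subgraph → Prop}
    (hP : ∀ A B, P A → P B → Disjoint A.edgeSet B.edgeSet →
      (A.verts ∩ B.verts).Nonempty → (A.verts ∩ B.verts).ncard ≤ 1 ∧ P (A ⊔ B))
    [Fintype ι] [Nonempty ι] (H : ι → G.Subgraph) (hH : ∀ i, P (H i))
    (hdisj : Pairwise (Disjoint on fun i => (H i).edgeSet)) :
    (sharedVerts H).ncard < Fintype.card ι := by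
  classical
  induction hn : Fintype.card ι generalizing ι with
  | zero => exact absurd hn Fintype.card_ne_zero
  | succ n ih =>
    by_cases hov : ∃ i j, i ≠ j ∧ ((H i).verts ∩ (H j).verts).Nonempty
    · obtain ⟨i, j, hij, hne⟩ := hov
      obtain ⟨hle, hPij⟩ := hP _ _ (hH i) (hH j) (hdisj hij) hne
      have : Nonempty {k // k ≠ j} := ⟨⟨i, hij⟩⟩
      have hmerged : (sharedVerts (mergePair H i j)).ncard < n := by
        refine ih (mergePair H i j) (fun k => ?_) (pairwise_disjoint_edgeSet_mergePair hdisj)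
          (by simp [hn])
        unfold mergePair
        split_ifs
        exacts [hPij, hH k]
      calc (sharedVerts H).ncard
          ≤ (sharedVerts (mergePair H i j) ∪ ((H i).verts ∩ (H j).verts)).ncard :=
            ncard_le_ncard (sharedVerts_subset_mergePair hij)
        _ ≤ (sharedVerts (mergePair H i j)).ncard + ((H i).verts ∩ (H j).verts).ncard :=
            ncard_union_le _ _
        _ < n + 1 := by omega
    · have hempty : sharedVerts H = ∅ := by
        refine eq_empty_of_forall_notMem ?_
        rintro v ⟨i, j, hij, hi, hj⟩
        exact hov ⟨i, j, hij, v, hi, hj⟩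
      simp [hempty]

end SimpleGraph.Subgraph

theorem minimalDensest_cycle_free_general [Fintype V] (G : SimpleGraph V)
    (r : ℕ) (hr : 0 < r) (H : Fin r → G.Subgraph)
    (hmin : ∀ i, IsMinimalDensest G (H i))
    (hdisj : ∀ i j, i ≠ j → (H i).edgeSet ∩ (H j).edgeSet = ∅) :
    {v : V | ∃ i j, i ≠ j ∧ v ∈ (H i).verts ∧ v ∈ (H j).verts}.ncard < r := by
  have : Nonempty (Fin r) := ⟨⟨0, hr⟩⟩
  have := Subgraph.ncard_sharedVerts_lt_card
    (fun A B hA hB hAB hne => ⟨hA.ncard_inter_verts_le_one hB hAB hne, hA.sup hB hAB hne⟩)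
    H (fun i => (hmin i).1) fun i j hij => disjoint_iff_inter_eq_empty.2 (hdisj i j hij)
  rwa [Fintype.card_fin] at this

/-- cycle-free property: the number of vertices shared between pairs of
pairwise edge-disjoint minimal densest subgraphs H1,…,Hr is strictly less than r. -/
theorem minimalDensest_cycle_free [Fintype V] (G : SimpleGraph V) (hG : G.Connected)
    (r : ℕ) (hr : 0 < r) (H : Fin r → G.Subgraph)
    (hmin : ∀ i, IsMinimalDensest G (H i))
    (hdisj : ∀ i j, i ≠ j → (H i).edgeSet ∩ (H j).edgeSet = ∅) :
    {v : V | ∃ i j, i ≠ j ∧ v ∈ (H i).verts ∧ v ∈ (H j).verts}.ncard < r :=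
  minimalDensest_cycle_free_general G r hr H hmin hdisj
end

section
/- If the core of the arboricity game is nonempty, then every core allocation x satisfies x_e = 0 for every edge e not belonging to any densest subgraph of G. -/
open scoped BigOperators

variable {V : Type*}

/-- A set of edges is a forest if the graph it spans is acyclic. -/
def IsForestEdgeSet (F : Set (Sym2 V)) : Prop :=
  (SimpleGraph.fromEdgeSet F).IsAcyclic

/-- Arboricity of an edge set: minimum number of forests covering it. -/
noncomputable def arboricity (S : Set (Sym2 V)) : ℕ :=
  sInf {k : ℕ | ∃ F : Fin k → Set (Sym2 V),
    (∀ i, IsForestEdgeSet (F i)) ∧ S ⊆ ⋃ i, F i}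

/-- A spanning tree of `G`, as a subgraph. -/
def IsSpanningTree (G : SimpleGraph V) (T : G.Subgraph) : Prop :=
  T.IsSpanning ∧ T.coe.IsTree

/-- Membership in the core of the arboricity game on `G`:
nonnegative, efficient, and no coalition pays more than its arboricity. -/
def inCore (G : SimpleGraph V) (x : Sym2 V → ℝ) : Prop :=
  (∀ e, 0 ≤ x e) ∧ (∑ᶠ e ∈ G.edgeSet, x e) = (arboricity G.edgeSet : ℝ) ∧
    ∀ S : Set (Sym2 V), S ⊆ G.edgeSet → (∑ᶠ e ∈ S, x e) ≤ (arboricity S : ℝ)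

/-!
Let `a` be the arboricity, which equals the fractional arboricity. A connected subgraph `K`
has `|E(K)| ≤ a (|V(K)| - 1)`, and if `K` contains `e` it is not densest, so the inequality is
strict and, `a` being an integer, `|E(K)| + 1 ≤ a (|V(K)| - 1)`. Summing over the components of
a spanning forest `F` of any spanning subgraph `H` gives `|E(H)| + [e ∈ H] ≤ a |E(F)|`.
Peeling a nonnegative weight `x` into its level sets and extending forests greedily from the top
level down produces a single forest `T` with `x(E) + x(e) ≤ a x(T)`. For a core allocation
`x(E) = a` and `x(T) ≤ 1`, hence `x(e) ≤ 0`.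
-/

open Finset SimpleGraph

namespace SimpleGraph

variable [Fintype V]

open scoped Classical

theorem sum_edgeFinset_eq_sum_sum_fiber {ι M : Type*} [Fintype ι] [AddCommMonoid M]
    (H : SimpleGraph V) (π : V → ι) (hπ : ∀ ⦃u v⦄, H.Adj u v → π u = π v) (g : Sym2 V → M) :
    ∑ f ∈ H.edgeFinset, g f = ∑ i, ∑ f ∈ H.edgeFinset ∩ ({v | π v = i} : Finset V).sym2, g f := by
  simp_rw [← filter_mem_eq_inter, sum_filter]
  rw [sum_comm]
  refine sum_congr rfl fun f hf => ?_
  induction f using Sym2.ind with | _ u v =>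
  have huv : π u = π v := hπ (by simpa using hf)
  simp [huv]

theorem IsAcyclic.card_edgeFinset_inter_sym2_add_one {F : SimpleGraph V} (hF : F.IsAcyclic)
    (D : F.ConnectedComponent) :
    #(F.edgeFinset ∩ ({v | F.connectedComponentMk v = D} : Finset V).sym2) + 1
      = #({v | F.connectedComponentMk v = D} : Finset V) := by
  have hsupp : ({v | F.connectedComponentMk v = D} : Finset V) = D.supp.toFinset := by
    ext v
    simp [ConnectedComponent.mem_supp_iff]
  have htree : (F.induce D.supp).IsTree := ⟨D.connected_toSimpleGraph, hF.induce D.supp⟩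
  rw [hsupp, ← map_edgeFinset_induce, card_map, Set.toFinset_card]
  convert htree.card_edgeFinset

theorem sum_edgeFinset_le_mul_card_edgeFinset_of_isAcyclic {H F : SimpleGraph V}
    {μ : Sym2 V → ℝ} {a : ℝ}
    (hμ : ∀ W : Finset V, (H.induce W).Connected →
      ∑ f ∈ H.edgeFinset ∩ W.sym2, μ f ≤ a * (#W - 1))
    (hFH : F ≤ H) (hF : F.IsAcyclic) (hspan : ∀ ⦃u v⦄, H.Adj u v → F.Reachable u v) :
    ∑ f ∈ H.edgeFinset, μ f ≤ a * #F.edgeFinset := by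
  have hcomp (D : F.ConnectedComponent) :
      (H.induce ↑({v | F.connectedComponentMk v = D} : Finset V)).Connected := by
    have hsupp : (↑({v | F.connectedComponentMk v = D} : Finset V) : Set V) = D.supp := by
      ext v
      simp [ConnectedComponent.mem_supp_iff]
    rw [hsupp]
    exact D.connected_toSimpleGraph.mono fun _ _ h => hFH h
  calc ∑ f ∈ H.edgeFinset, μ f
      = ∑ D, ∑ f ∈ H.edgeFinset ∩ ({v | F.connectedComponentMk v = D} : Finset V).sym2, μ f :=
        H.sum_edgeFinset_eq_sum_sum_fiber _ (fun _ _ h => ConnectedComponent.sound (hspan h)) μ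
    _ ≤ ∑ D, a * (#({v | F.connectedComponentMk v = D} : Finset V) - 1) :=
        sum_le_sum fun D _ => hμ _ (hcomp D)
    _ = a * ∑ D, #(F.edgeFinset ∩ ({v | F.connectedComponentMk v = D} : Finset V).sym2) := by
        rw [Nat.cast_sum, mul_sum]
        refine sum_congr rfl fun D _ => ?_
        rw [← hF.card_edgeFinset_inter_sym2_add_one D]
        push_cast
        ring
    _ = a * #F.edgeFinset := by
        rw [card_eq_sum_ones, F.sum_edgeFinset_eq_sum_sum_fiber _
          (fun _ _ h => ConnectedComponent.sound h.reachable)]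
        simp

/- Lower all weights by their minimum `θ`, attained at `f₀`: the lowered weights vanish on `f₀`,
so the induction hypothesis applies to `G - f₀`, and a spanning forest of `G` extending the forest
found there pays for the bottom layer `θ` by the rank bound. -/
theorem exists_isAcyclic_sum_mul_le_mul_sum {G : SimpleGraph V} {μ : Sym2 V → ℝ} {a : ℝ}
    (ha : 0 ≤ a)
    (hμ : ∀ H ≤ G, ∀ W : Finset V, (H.induce W).Connected →
      ∑ f ∈ H.edgeFinset ∩ W.sym2, μ f ≤ a * (#W - 1))
    {w : Sym2 V → ℝ} (hw : ∀ f ∈ G.edgeSet, 0 ≤ w f) :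
    ∃ F ≤ G, F.IsAcyclic ∧ ∑ f ∈ G.edgeFinset, μ f * w f ≤ a * ∑ f ∈ F.edgeFinset, w f := by
  induction G using WellFoundedLT.induction generalizing w with | _ G ih =>
  obtain hempty | hne := G.edgeFinset.eq_empty_or_nonempty
  · exact ⟨G, le_rfl, edgeFinset_eq_empty.1 hempty ▸ isAcyclic_bot, by simp [hempty]⟩
  obtain ⟨f₀, hf₀, hmin⟩ := G.edgeFinset.exists_min_image w hne
  set θ := w f₀
  have hθ : 0 ≤ θ := hw f₀ (mem_edgeFinset.1 hf₀)
  set G' := G.deleteEdges {f₀}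
  have hG' : G' < G := lt_of_le_of_ne (deleteEdges_le _) fun h =>
    (deleteEdges_eq_self.1 h).notMem_of_mem_left (mem_edgeFinset.1 hf₀) rfl
  obtain ⟨F', hF'G', hF', hF'sum⟩ := ih G' hG' (fun H hH => hμ H (hH.trans hG'.le))
    (w := fun f => w f - θ)
    fun f hf => sub_nonneg.2 (hmin f (mem_edgeFinset.2 (edgeSet_mono hG'.le hf)))
  obtain ⟨F, hF'F, hFG, hF, hreach⟩ :=
    exists_isAcyclic_reachable_eq_le_of_le_of_isAcyclic (hF'G'.trans hG'.le) hF'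
  have hrank : ∑ f ∈ G.edgeFinset, μ f ≤ a * #F.edgeFinset :=
    sum_edgeFinset_le_mul_card_edgeFinset_of_isAcyclic (hμ G le_rfl) hFG hF
      fun _ _ h => hreach ▸ h.reachable
  have hG'sum : ∑ f ∈ G.edgeFinset, μ f * (w f - θ) = ∑ f ∈ G'.edgeFinset, μ f * (w f - θ) := by
    have hG'E : G'.edgeFinset = G.edgeFinset.erase f₀ := by ext; simp [G', and_comm]
    rw [hG'E, ← add_sum_erase _ _ hf₀, sub_self, mul_zero, zero_add]
  have hF'F : ∑ f ∈ F'.edgeFinset, (w f - θ) ≤ ∑ f ∈ F.edgeFinset, (w f - θ) :=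
    sum_le_sum_of_subset_of_nonneg (edgeFinset_mono hF'F)
      fun f hf _ => sub_nonneg.2 (hmin f (edgeFinset_mono hFG hf))
  refine ⟨F, hFG, hF, ?_⟩
  calc ∑ f ∈ G.edgeFinset, μ f * w f
      = ∑ f ∈ G'.edgeFinset, μ f * (w f - θ) + θ * ∑ f ∈ G.edgeFinset, μ f := by
        rw [← hG'sum, mul_sum, ← sum_add_distrib]
        exact sum_congr rfl fun f _ => by ring
    _ ≤ a * ∑ f ∈ F.edgeFinset, (w f - θ) + θ * (a * #F.edgeFinset) := by
        gcongr
        convert hF'sum.trans (mul_le_mul_of_nonneg_left hF'F ha)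
    _ = a * ∑ f ∈ F.edgeFinset, w f := by
        rw [sum_sub_distrib, sum_const, nsmul_eq_mul]
        ring

theorem exists_subgraph_connected_edgeSet_eq_inter_sym2 {G H : SimpleGraph V} (hHG : H ≤ G)
    {W : Finset V} (hW : (H.induce W).Connected) :
    ∃ K : G.Subgraph, K.Connected ∧ K.verts = W ∧ K.edgeSet = ↑(H.edgeFinset ∩ W.sym2) := by
  refine ⟨(toSubgraph H hHG).induce W, ⟨?_⟩, rfl, ?_⟩
  · have hcoe : ((toSubgraph H hHG).induce W).coe = H.induce W := by
      ext ⟨a, ha⟩ ⟨b, hb⟩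
      exact ⟨fun h => h.2.2, fun h => ⟨ha, hb, h⟩⟩
    rw [hcoe]
    exact hW
  · ext f
    induction f using Sym2.ind with | _ u v =>
    simp [and_comm, and_assoc]

end SimpleGraph

section Density

variable {G : SimpleGraph V}

theorem density_le_ncard_edgeSet (K : G.Subgraph) : density G K ≤ K.edgeSet.ncard := by
  unfold density
  rcases lt_or_ge K.verts.ncard 2 with hn | hn
  · refine (div_nonpos_of_nonneg_of_nonpos (Nat.cast_nonneg _) ?_).trans (Nat.cast_nonneg _)
    have : (K.verts.ncard : ℝ) ≤ 1 := by exact_mod_cast Nat.le_of_lt_succ hn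
    linarith
  · refine div_le_self (Nat.cast_nonneg _) ?_
    have : (2 : ℝ) ≤ K.verts.ncard := by exact_mod_cast hn
    linarith

variable [Finite V]

theorem SimpleGraph.Subgraph.two_le_ncard_verts_of_mem_edgeSet {K : G.Subgraph} {f : Sym2 V}
    (hf : f ∈ K.edgeSet) : 2 ≤ K.verts.ncard := by
  induction f using Sym2.ind with | _ u v =>
  exact (Set.one_lt_ncard_iff).2 ⟨u, v, K.edge_vert hf, K.edge_vert hf.symm, (K.adj_sub hf).ne⟩

theorem bddAbove_density :
    BddAbove {d : ℝ | ∃ H : G.Subgraph, H.Connected ∧ d = density G H} := by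
  refine ⟨Nat.card (Sym2 V), ?_⟩
  rintro d ⟨K, -, rfl⟩
  exact (density_le_ncard_edgeSet K).trans (by exact_mod_cast Set.ncard_le_card _)

theorem density_le_fracArboricity_s10 {K : G.Subgraph} (hK : K.Connected) :
    density G K ≤ fracArboricity G :=
  le_csSup bddAbove_density ⟨K, hK, rfl⟩

theorem ncard_edgeSet_le_fracArboricity_mul {K : G.Subgraph} (hK : K.Connected)
    (hn : 2 ≤ K.verts.ncard) :
    (K.edgeSet.ncard : ℝ) ≤ fracArboricity G * (K.verts.ncard - 1) := by
  have hpos : (0 : ℝ) < K.verts.ncard - 1 := by rw [sub_pos]; exact_mod_cast hn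
  exact (div_le_iff₀ hpos).1 (density_le_fracArboricity_s10 hK)

theorem ncard_edgeSet_lt_fracArboricity_mul {K : G.Subgraph} (hK : K.Connected)
    (hn : 2 ≤ K.verts.ncard) (hd : ¬ IsDensest G K) :
    (K.edgeSet.ncard : ℝ) < fracArboricity G * (K.verts.ncard - 1) := by
  have hpos : (0 : ℝ) < K.verts.ncard - 1 := by rw [sub_pos]; exact_mod_cast hn
  exact (div_lt_iff₀ hpos).1 <| (density_le_fracArboricity_s10 hK).lt_of_ne fun h => hd ⟨hK, h⟩

open scoped Classical in
theorem ncard_edgeSet_add_ite_mem_le {e : Sym2 V}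
    (hcore : fracArboricity G = (arboricity G.edgeSet : ℝ))
    (hne : ∀ H : G.Subgraph, IsDensest G H → e ∉ H.edgeSet) {K : G.Subgraph} (hK : K.Connected) :
    K.edgeSet.ncard + (if e ∈ K.edgeSet then 1 else 0)
      ≤ arboricity G.edgeSet * (K.verts.ncard - 1) := by
  obtain hempty | ⟨f, hf⟩ := K.edgeSet.eq_empty_or_nonempty
  · simp [hempty]
  have hn := K.two_le_ncard_verts_of_mem_edgeSet hf
  have hcast : fracArboricity G * (K.verts.ncard - 1)
      = ((arboricity G.edgeSet * (K.verts.ncard - 1) : ℕ) : ℝ) := by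
    rw [hcore]
    push_cast [Nat.cast_sub (by omega : 1 ≤ K.verts.ncard)]
    ring
  by_cases he : e ∈ K.edgeSet
  · have hlt := ncard_edgeSet_lt_fracArboricity_mul hK hn fun hd => hne K hd he
    rw [hcast, Nat.cast_lt] at hlt
    simpa [he] using hlt
  · have hle := ncard_edgeSet_le_fracArboricity_mul hK hn
    rw [hcast, Nat.cast_le] at hle
    simpa [he] using hle

end Density

open scoped Classical in
theorem sum_one_add_ite_eq_le_arboricity_mul [Fintype V] {G : SimpleGraph V} {e : Sym2 V}
    (hcore : fracArboricity G = (arboricity G.edgeSet : ℝ))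
    (hne : ∀ H : G.Subgraph, IsDensest G H → e ∉ H.edgeSet)
    {H : SimpleGraph V} (hHG : H ≤ G) {W : Finset V} (hW : (H.induce W).Connected) :
    ∑ f ∈ H.edgeFinset ∩ W.sym2, (1 + if f = e then 1 else 0 : ℝ)
      ≤ arboricity G.edgeSet * ((#W : ℝ) - 1) := by
  obtain ⟨K, hK, hverts, hedges⟩ := exists_subgraph_connected_edgeSet_eq_inter_sym2 hHG hW
  have h := ncard_edgeSet_add_ite_mem_le hcore hne hK
  rw [hverts, hedges, Set.ncard_coe_finset, Set.ncard_coe_finset, mem_coe] at h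
  have hW1 : 1 ≤ #W := card_pos.2 (by simpa [Finset.Nonempty] using hW.nonempty)
  rw [sum_add_distrib, sum_const, sum_ite_eq', nsmul_one]
  have := (Nat.cast_le (α := ℝ)).2 h
  push_cast [Nat.cast_sub hW1] at this
  split_ifs at this ⊢ <;> simpa using this

theorem arboricity_edgeSet_le_one {F : SimpleGraph V} (hF : F.IsAcyclic) :
    arboricity F.edgeSet ≤ 1 :=
  Nat.sInf_le ⟨fun _ => F.edgeSet, fun _ => by rwa [IsForestEdgeSet, fromEdgeSet_edgeSet],
    fun _ hf => Set.mem_iUnion.2 ⟨0, hf⟩⟩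

namespace inCore

variable [Fintype V] {G : SimpleGraph V} {x : Sym2 V → ℝ}

open scoped Classical

theorem sum_edgeFinset_eq (hx : inCore G x) :
    ∑ f ∈ G.edgeFinset, x f = arboricity G.edgeSet := by
  rw [← finsum_mem_coe_finset, coe_edgeFinset]
  exact hx.2.1

theorem sum_edgeFinset_le_one (hx : inCore G x) {F : SimpleGraph V} (hFG : F ≤ G)
    (hF : F.IsAcyclic) : ∑ f ∈ F.edgeFinset, x f ≤ 1 := by
  rw [← finsum_mem_coe_finset, coe_edgeFinset]
  exact (hx.2.2 _ (edgeSet_mono hFG)).trans (by exact_mod_cast arboricity_edgeSet_le_one hF)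

end inCore

theorem core_zero_outside_densest_general [Fintype V] (G : SimpleGraph V)
    (hcore : fracArboricity G = (arboricity G.edgeSet : ℝ))
    (x : Sym2 V → ℝ) (hx : inCore G x) (e : Sym2 V) (he : e ∈ G.edgeSet)
    (hne : ∀ H : G.Subgraph, IsDensest G H → e ∉ H.edgeSet) :
    x e = 0 := by
  classical
  obtain ⟨F, hFG, hF, hFsum⟩ := exists_isAcyclic_sum_mul_le_mul_sum
    (Nat.cast_nonneg (arboricity G.edgeSet))
    (fun H hHG W hW => sum_one_add_ite_eq_le_arboricity_mul hcore hne hHG hW) (w := x)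
    fun f _ => hx.1 f
  have hweighted : ∑ f ∈ G.edgeFinset, (1 + if f = e then 1 else 0) * x f
      = arboricity G.edgeSet + x e := by
    simp [add_mul, sum_add_distrib, hx.sum_edgeFinset_eq, he]
  have hforest := mul_le_mul_of_nonneg_left (hx.sum_edgeFinset_le_one hFG hF)
    (Nat.cast_nonneg (α := ℝ) (arboricity G.edgeSet))
  linarith [hx.1 e]

/-- in any core allocation, an edge not in any densest subgraph
gets value zero. -/
theorem core_zero_outside_densest [Fintype V] (G : SimpleGraph V) (hG : G.Connected)
    (hcore : fracArboricity G = (arboricity G.edgeSet : ℝ))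
    (x : Sym2 V → ℝ) (hx : inCore G x) (e : Sym2 V) (he : e ∈ G.edgeSet)
    (hne : ∀ H : G.Subgraph, IsDensest G H → e ∉ H.edgeSet) :
    x e = 0 :=
  core_zero_outside_densest_general G hcore x hx e he hne
end

section
/- The edge-set intersection of two densest subgraphs is either empty or induces a densest subgraph: if H and K are densest subgraphs of G with E(H) ∩ E(K) ≠ ∅, then H ∪ K is a densest subgraph, and the subgraph H ∩ K (on common vertices and edges) has density equal to a_f(G). -/
open scoped BigOperators

variable {V : Type*}

/-! Write `m` and `n` for the numbers of edges and vertices and `a` for the fractional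
arboricity. For subgraphs, `m` and `n` are modular: `m (H ⊔ K) + m (H ⊓ K) = m H + m K`, and
likewise for `n`. Every nonempty subgraph `W` satisfies `m W ≤ a * (n W - 1)`: for connected `W`
by maximality of `a`, and in general by splitting `W` into a connected component and the rest,
since `a ≥ 0`. As `m H = a * (n H - 1)` and `m K = a * (n K - 1)`, the inequalities for `H ⊔ K`
and `H ⊓ K` add up to an equality, so both are equalities. The shared edge makes `H ⊔ K`
connected and gives `H ⊓ K` at least two vertices, which turns these equalities into statements
about densities. -/

namespace SimpleGraph.Subgraph

variable {G : SimpleGraph V}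

theorem one_lt_ncard_verts_of_edgeSet_nonempty [Finite V] {W : G.Subgraph}
    (hW : W.edgeSet.Nonempty) : 1 < W.verts.ncard := by
  obtain ⟨⟨x, y⟩, he⟩ := hW
  have hxy : W.Adj x y := he
  have h := Set.ncard_le_ncard (Set.pair_subset hxy.fst_mem hxy.snd_mem) W.verts.toFinite
  rwa [Set.ncard_pair hxy.ne] at h

theorem ncard_edgeSet_sup_add_inf [Finite V] (H K : G.Subgraph) :
    (H ⊔ K).edgeSet.ncard + (H ⊓ K).edgeSet.ncard = H.edgeSet.ncard + K.edgeSet.ncard := by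
  rw [edgeSet_sup, edgeSet_inf]
  exact Set.ncard_union_add_ncard_inter _ _

theorem ncard_verts_sup_add_inf [Finite V] (H K : G.Subgraph) :
    (H ⊔ K).verts.ncard + (H ⊓ K).verts.ncard = H.verts.ncard + K.verts.ncard := by
  rw [verts_sup, verts_inf]
  exact Set.ncard_union_add_ncard_inter _ _

theorem ncard_edgeSet_induce_add_deleteVerts [Finite V] {W : G.Subgraph} {s : Set V}
    (hs : ∀ ⦃x y⦄, W.Adj x y → x ∈ s → y ∈ s) :
    (W.induce s).edgeSet.ncard + (W.deleteVerts s).edgeSet.ncard = W.edgeSet.ncard := by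
  have hdisj : Disjoint (W.induce s).edgeSet (W.deleteVerts s).edgeSet := by
    rw [Set.disjoint_left]
    rintro ⟨x, y⟩ he he'
    exact (deleteVerts_adj.1 he').2.1 he.1
  have hunion : (W.induce s).edgeSet ∪ (W.deleteVerts s).edgeSet = W.edgeSet := by
    ext ⟨x, y⟩
    simp only [Set.mem_union, Subgraph.mem_edgeSet, induce_adj]
    refine ⟨by rintro (⟨-, -, h⟩ | ⟨-, -, h⟩) <;> exact h, fun h => ?_⟩
    by_cases hx : x ∈ s
    · exact .inl ⟨hx, hs h hx, h⟩
    · exact .inr ⟨⟨h.fst_mem, hx⟩, ⟨h.snd_mem, fun hy => hx (hs h.symm hy)⟩, h⟩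
  rw [← Set.ncard_union_eq hdisj, hunion]

theorem exists_adj_closed_of_not_connected {W : G.Subgraph} (hne : W.verts.Nonempty)
    (hW : ¬W.Connected) :
    ∃ s ⊆ W.verts, s.Nonempty ∧ (W.verts \ s).Nonempty ∧
      ∀ ⦃x y⦄, W.Adj x y → x ∈ s → y ∈ s := by
  rw [Subgraph.connected_iff, Subgraph.preconnected_iff, and_iff_left hne,
    SimpleGraph.Preconnected] at hW
  simp only [not_forall] at hW
  obtain ⟨⟨u, hu⟩, ⟨v, hv⟩, huv⟩ := hW
  refine ⟨{w | ∃ hw : w ∈ W.verts, W.coe.Reachable ⟨u, hu⟩ ⟨w, hw⟩}, fun w hw => hw.1,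
    ⟨u, hu, .rfl⟩, ⟨v, hv, fun ⟨_, h⟩ => huv h⟩, ?_⟩
  rintro x y hxy ⟨hx, hr⟩
  exact ⟨hxy.snd_mem, hr.trans hxy.coe.reachable⟩

theorem ncard_edgeSet_le_of_forall_connected [Finite V] {a : ℝ} (ha : 0 ≤ a)
    (hconn : ∀ W : G.Subgraph, W.Connected → (W.edgeSet.ncard : ℝ) ≤ a * (W.verts.ncard - 1))
    (W : G.Subgraph) (hW : W.verts.Nonempty) :
    (W.edgeSet.ncard : ℝ) ≤ a * (W.verts.ncard - 1) := by
  induction W using WellFoundedLT.induction with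
  | _ W ih =>
  by_cases hc : W.Connected
  · exact hconn W hc
  obtain ⟨s, hsW, hs, hWs, hclosed⟩ := exists_adj_closed_of_not_connected hW hc
  have hlt₁ : W.induce s < W := by
    refine lt_of_le_of_ne ((induce_mono_right hsW).trans_eq induce_self_verts) fun h => ?_
    obtain ⟨v, hv, hvs⟩ := hWs
    have hv' : v ∈ (W.induce s).verts := by rw [h]; exact hv
    exact hvs hv'
  have hlt₂ : W.deleteVerts s < W := by
    refine lt_of_le_of_ne deleteVerts_le fun h => ?_
    obtain ⟨u, hu⟩ := hs
    have hu' : u ∈ (W.deleteVerts s).verts := by rw [h]; exact hsW hu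
    exact hu'.2 hu
  have h₁ := ih _ hlt₁ hs
  have h₂ := ih _ hlt₂ hWs
  rw [induce_verts] at h₁
  rw [deleteVerts_verts] at h₂
  have hE : ((W.induce s).edgeSet.ncard : ℝ) + (W.deleteVerts s).edgeSet.ncard =
      W.edgeSet.ncard := by
    exact_mod_cast ncard_edgeSet_induce_add_deleteVerts hclosed
  have hV : ((W.verts \ s).ncard : ℝ) + s.ncard = W.verts.ncard := by
    exact_mod_cast Set.ncard_sdiff_add_ncard_of_subset hsW
  rw [← hE, ← hV]
  linarith

end SimpleGraph.Subgraph

section Density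

variable {G : SimpleGraph V}

theorem sub_one_pos_of_edgeSet_nonempty [Finite V] {W : G.Subgraph} (hW : W.edgeSet.Nonempty) :
    0 < (W.verts.ncard : ℝ) - 1 :=
  sub_pos.2 (by exact_mod_cast W.one_lt_ncard_verts_of_edgeSet_nonempty hW)

theorem sub_one_nonneg_of_connected [Finite V] {W : G.Subgraph} (hW : W.Connected) :
    0 ≤ (W.verts.ncard : ℝ) - 1 :=
  sub_nonneg.2 (Nat.one_le_cast.2 ((Set.ncard_pos W.verts.toFinite).2 hW.nonempty))

theorem density_eq_iff [Finite V] {W : G.Subgraph} (hW : W.edgeSet.Nonempty) {a : ℝ} :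
    density G W = a ↔ (W.edgeSet.ncard : ℝ) = a * (W.verts.ncard - 1) :=
  div_eq_iff (sub_one_pos_of_edgeSet_nonempty hW).ne'

theorem density_le_iff [Finite V] {W : G.Subgraph} (hW : W.edgeSet.Nonempty) {a : ℝ} :
    density G W ≤ a ↔ (W.edgeSet.ncard : ℝ) ≤ a * (W.verts.ncard - 1) :=
  div_le_iff₀ (sub_one_pos_of_edgeSet_nonempty hW)

theorem density_le_fracArboricity_s12 [Finite V] {W : G.Subgraph} (hW : W.Connected) :
    density G W ≤ fracArboricity G :=
  le_csSup ((Set.finite_range (density G)).subset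
    (by rintro _ ⟨H, -, rfl⟩; exact ⟨H, rfl⟩)).bddAbove ⟨W, hW, rfl⟩

theorem fracArboricity_nonneg [Finite V] (G : SimpleGraph V) : 0 ≤ fracArboricity G := by
  refine Real.sSup_nonneg ?_
  rintro _ ⟨W, hW, rfl⟩
  exact div_nonneg (Nat.cast_nonneg _) (sub_one_nonneg_of_connected hW)

theorem ncard_edgeSet_le_fracArboricity_mul_of_connected [Finite V] {W : G.Subgraph}
    (hW : W.Connected) : (W.edgeSet.ncard : ℝ) ≤ fracArboricity G * (W.verts.ncard - 1) := by
  rcases W.edgeSet.eq_empty_or_nonempty with h | h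
  · rw [h, Set.ncard_empty, Nat.cast_zero]
    exact mul_nonneg (fracArboricity_nonneg G) (sub_one_nonneg_of_connected hW)
  · exact (density_le_iff h).1 (density_le_fracArboricity_s12 hW)

theorem ncard_edgeSet_le_fracArboricity_mul_s12 [Finite V] {W : G.Subgraph}
    (hW : W.verts.Nonempty) : (W.edgeSet.ncard : ℝ) ≤ fracArboricity G * (W.verts.ncard - 1) :=
  W.ncard_edgeSet_le_of_forall_connected (fracArboricity_nonneg G)
    (fun _ => ncard_edgeSet_le_fracArboricity_mul_of_connected) hW

end Density

theorem densest_intersection_union_general [Fintype V] (G : SimpleGraph V)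
    (H K : G.Subgraph) (hH : IsDensest G H) (hK : IsDensest G K)
    (hne : (H.edgeSet ∩ K.edgeSet).Nonempty) :
    IsDensest G (H ⊔ K) ∧ density G (H ⊓ K) = fracArboricity G := by
  have hHe : H.edgeSet.Nonempty := hne.mono Set.inter_subset_left
  have hKe : K.edgeSet.Nonempty := hne.mono Set.inter_subset_right
  have hIe : (H ⊓ K).edgeSet.Nonempty := by rwa [SimpleGraph.Subgraph.edgeSet_inf]
  have hUe : (H ⊔ K).edgeSet.Nonempty :=
    hHe.mono (SimpleGraph.Subgraph.edgeSet_mono le_sup_left)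
  have hIv : (H ⊓ K).verts.Nonempty := by
    obtain ⟨⟨x, y⟩, hxy⟩ := hIe
    exact ⟨x, SimpleGraph.Subgraph.Adj.fst_mem hxy⟩
  have hUconn : (H ⊔ K).Connected :=
    SimpleGraph.Subgraph.connected_sup hH.1.preconnected hK.1.preconnected hIv
  have hmH := (density_eq_iff hHe).1 hH.2
  have hmK := (density_eq_iff hKe).1 hK.2
  have hmU := ncard_edgeSet_le_fracArboricity_mul_of_connected hUconn
  have hmI := ncard_edgeSet_le_fracArboricity_mul_s12 hIv
  have hE : ((H ⊔ K).edgeSet.ncard : ℝ) + (H ⊓ K).edgeSet.ncard =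
      H.edgeSet.ncard + K.edgeSet.ncard := by
    exact_mod_cast H.ncard_edgeSet_sup_add_inf K
  have hV : ((H ⊔ K).verts.ncard : ℝ) + (H ⊓ K).verts.ncard = H.verts.ncard + K.verts.ncard := by
    exact_mod_cast H.ncard_verts_sup_add_inf K
  have haV := congrArg (fracArboricity G * ·) hV
  exact ⟨⟨hUconn, (density_eq_iff hUe).2 (by linarith)⟩, (density_eq_iff hIe).2 (by linarith)⟩

/-- if two densest subgraphs share an edge, their union is a densest
subgraph and their intersection has density equal to the fractional arboricity. -/
theorem densest_intersection_union [Fintype V] (G : SimpleGraph V) (hG : G.Connected)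
    (H K : G.Subgraph) (hH : IsDensest G H) (hK : IsDensest G K)
    (hne : (H.edgeSet ∩ K.edgeSet).Nonempty) :
    IsDensest G (H ⊔ K) ∧ density G (H ⊓ K) = fracArboricity G :=
  densest_intersection_union_general G H K hH hK hne
end
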